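/- For every z' ∈ ℝ^d with |z'| ≤ C: d_TV(ρ_{z'}, π_{z'}) ≤ (1/γ) · exp(2(BC + R)/γ) · sup_{a∈𝒜} |(f(a) − g(a))·z'|. -/

import Mathlib

open MeasureTheory
open scoped RealInnerProductSpace

/-- The Gibbs probability density `π_z(a) ∝ exp((f(a)·z + r(a))/γ)` on the set `𝒜`. -/
noncomputable def gibbs {m d : ℕ} (𝒜 : Set (EuclideanSpace ℝ (Fin m))) (γ : ℝ)
    (f : EuclideanSpace ℝ (Fin m) → EuclideanSpace ℝ (Fin d))
    (r : EuclideanSpace ℝ (Fin m) → ℝ)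
    (z : EuclideanSpace ℝ (Fin d)) (a : EuclideanSpace ℝ (Fin m)) : ℝ :=
  Real.exp ((⟪f a, z⟫ + r a) / γ) /
    ∫ a' in 𝒜, Real.exp ((⟪f a', z⟫ + r a') / γ)

/-- Total variation distance between two densities on `𝒜`:
`d_TV(p,q) = sup_{A ⊆ 𝒜 measurable} |∫_A p − ∫_A q|`. -/
noncomputable def dTV {m : ℕ} (𝒜 : Set (EuclideanSpace ℝ (Fin m)))
    (p q : EuclideanSpace ℝ (Fin m) → ℝ) : ℝ :=
  ⨆ A : {A : Set (EuclideanSpace ℝ (Fin m)) // MeasurableSet A ∧ A ⊆ 𝒜},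
    |(∫ a in A.1, p a) - ∫ a in A.1, q a|

/-!
Write `φ`, `ψ` for the unnormalised weights of `π_z`, `ρ_z`. On `𝒜` their exponents lie in
`[-K, K]` with `K = (BC + R)/γ`, so `ψ ≥ e^{-K}`, and since `exp` is `e^K`-Lipschitz on
`(-∞, K]`, `|ψ - φ| ≤ e^K M / γ` with `M = sup |(f - g)·z|`. For `A ⊆ 𝒜`, splitting
`𝒜 = A ∪ (𝒜 \ A)` gives
`ψ(A) φ(𝒜) - ψ(𝒜) φ(A) = (ψ - φ)(A) φ(𝒜 \ A) - (ψ - φ)(𝒜 \ A) φ(A)`,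
hence `|ρ(A) - π(A)| ≤ ‖ψ - φ‖₁ / ψ(𝒜) ≤ |𝒜| e^K M γ⁻¹ / (|𝒜| e^{-K})`.
-/

open Set

theorem abs_div_add_sub_div_add_le {pA pB qA qB dA dB : ℝ} (hpA : 0 ≤ pA) (hpB : 0 ≤ pB)
    (hP : 0 < pA + pB) (hQ : 0 < qA + qB) (hdA : |qA - pA| ≤ dA) (hdB : |qB - pB| ≤ dB) :
    |qA / (qA + qB) - pA / (pA + pB)| ≤ (dA + dB) / (qA + qB) := by
  have hnum : |qA * (pA + pB) - (qA + qB) * pA| ≤ (dA + dB) * (pA + pB) :=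
    calc |qA * (pA + pB) - (qA + qB) * pA| = |(qA - pA) * pB - (qB - pB) * pA| := by ring_nf
      _ ≤ |qA - pA| * pB + |qB - pB| * pA := by
        refine (abs_sub _ _).trans ?_
        rw [abs_mul, abs_mul, abs_of_nonneg hpA, abs_of_nonneg hpB]
      _ ≤ dA * pB + dB * pA := by gcongr
      _ ≤ (dA + dB) * (pA + pB) := by
        nlinarith [(abs_nonneg (qA - pA)).trans hdA, (abs_nonneg (qB - pB)).trans hdB]
  rw [div_sub_div _ _ hQ.ne' hP.ne', abs_div, abs_of_pos (mul_pos hQ hP),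
    div_le_div_iff₀ (mul_pos hQ hP) hQ]
  nlinarith

section SetIntegral

variable {α : Type*} [MeasurableSpace α] {μ : Measure α} {s A : Set α} {φ ψ : α → ℝ}

theorem abs_setIntegral_div_sub_setIntegral_div_le (hs : MeasurableSet s) (hA : MeasurableSet A)
    (hAs : A ⊆ s) (hφ : IntegrableOn φ s μ) (hψ : IntegrableOn ψ s μ) (hφ0 : ∀ a ∈ s, 0 ≤ φ a)
    (hZφ : 0 < ∫ a in s, φ a ∂μ) (hZψ : 0 < ∫ a in s, ψ a ∂μ) :
    |(∫ a in A, ψ a ∂μ) / (∫ a in s, ψ a ∂μ) - (∫ a in A, φ a ∂μ) / (∫ a in s, φ a ∂μ)|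
      ≤ (∫ a in s, |ψ a - φ a| ∂μ) / ∫ a in s, ψ a ∂μ := by
  have split : ∀ F : α → ℝ, IntegrableOn F s μ →
      ∫ a in s, F a ∂μ = (∫ a in A, F a ∂μ) + ∫ a in s \ A, F a ∂μ := fun F hF => by
    simpa [inter_eq_right.2 hAs] using (integral_inter_add_sdiff hA hF).symm
  have abs_sub_le : ∀ t ⊆ s, |(∫ a in t, ψ a ∂μ) - ∫ a in t, φ a ∂μ| ≤ ∫ a in t, |ψ a - φ a| ∂μ :=
    fun t ht => by
      rw [← integral_sub (hψ.mono_set ht) (hφ.mono_set ht)]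
      exact abs_integral_le_integral_abs
  rw [split φ hφ] at hZφ ⊢
  rw [split ψ hψ] at hZψ ⊢
  rw [split (fun a => |ψ a - φ a|) (hψ.sub hφ).abs]
  exact abs_div_add_sub_div_add_le (setIntegral_nonneg hA fun a ha => hφ0 a (hAs ha))
    (setIntegral_nonneg (hs.diff hA) fun a ha => hφ0 a ha.1) hZφ hZψ
    (abs_sub_le A hAs) (abs_sub_le _ sdiff_subset)

theorem abs_setIntegral_div_sub_setIntegral_div_le_of_bounds (hs : MeasurableSet s)
    (hμs0 : μ s ≠ 0) (hμs : μ s ≠ ⊤) (hA : MeasurableSet A) (hAs : A ⊆ s)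
    (hφ : IntegrableOn φ s μ) (hψ : IntegrableOn ψ s μ) {c δ : ℝ} (hc : 0 < c)
    (hφc : ∀ a ∈ s, c ≤ φ a) (hψc : ∀ a ∈ s, c ≤ ψ a) (hδ : ∀ a ∈ s, |ψ a - φ a| ≤ δ) :
    |(∫ a in A, ψ a ∂μ) / (∫ a in s, ψ a ∂μ) - (∫ a in A, φ a ∂μ) / (∫ a in s, φ a ∂μ)|
      ≤ δ / c := by
  have hμpos : 0 < μ.real s := ENNReal.toReal_pos hμs0 hμs
  have hZψ : c * μ.real s ≤ ∫ a in s, ψ a ∂μ := setIntegral_ge_of_const_le_real hs hμs hψc hψ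
  have hZφ : c * μ.real s ≤ ∫ a in s, φ a ∂μ := setIntegral_ge_of_const_le_real hs hμs hφc hφ
  have hL1 : ∫ a in s, |ψ a - φ a| ∂μ ≤ δ * μ.real s :=
    (le_abs_self _).trans <| by
      simpa using norm_setIntegral_le_of_norm_le_const (f := fun a => |ψ a - φ a|)
        hμs.lt_top (by simpa using hδ)
  calc _ ≤ (∫ a in s, |ψ a - φ a| ∂μ) / ∫ a in s, ψ a ∂μ :=
        abs_setIntegral_div_sub_setIntegral_div_le hs hA hAs hφ hψ
          (fun a ha => hc.le.trans (hφc a ha)) ((mul_pos hc hμpos).trans_le hZφ)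
          ((mul_pos hc hμpos).trans_le hZψ)
    _ ≤ δ * μ.real s / (c * μ.real s) :=
        div_le_div₀ ((integral_nonneg fun _ => abs_nonneg _).trans hL1) hL1 (by positivity) hZψ
    _ = δ / c := mul_div_mul_right δ c hμpos.ne'

end SetIntegral

theorem abs_exp_sub_exp_le {x y K : ℝ} (hx : x ≤ K) (hy : y ≤ K) :
    |Real.exp x - Real.exp y| ≤ Real.exp K * |x - y| := by
  wlog h : y ≤ x generalizing x y
  · rw [abs_sub_comm, abs_sub_comm x y]; exact this hy hx (le_of_not_ge h)
  rw [abs_of_nonneg (sub_nonneg.2 (Real.exp_le_exp.2 h)), abs_of_nonneg (sub_nonneg.2 h)]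
  calc Real.exp x - Real.exp y = Real.exp x * (1 - Real.exp (y - x)) := by
        rw [mul_sub, mul_one, ← Real.exp_add]; ring_nf
    _ ≤ Real.exp x * (x - y) :=
        mul_le_mul_of_nonneg_left (by linarith [Real.add_one_le_exp (y - x)]) (Real.exp_pos x).le
    _ ≤ Real.exp K * (x - y) :=
        mul_le_mul_of_nonneg_right (Real.exp_le_exp.2 hx) (sub_nonneg.2 h)

theorem abs_inner_add_div_le {E : Type*} [NormedAddCommGroup E] [InnerProductSpace ℝ E]
    {x z : E} {t B C R γ : ℝ} (hγ : 0 < γ) (hx : ‖x‖ ≤ B) (hz : ‖z‖ ≤ C) (ht : |t| ≤ R) :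
    |(⟪x, z⟫ + t) / γ| ≤ (B * C + R) / γ := by
  rw [abs_div, abs_of_pos hγ]
  gcongr
  calc |⟪x, z⟫ + t| ≤ ‖x‖ * ‖z‖ + |t| :=
        (abs_add_le _ _).trans (by gcongr; exact abs_real_inner_le_norm _ _)
    _ ≤ ‖x‖ * C + R := by gcongr
    _ ≤ B * C + R := by gcongr; exact (norm_nonneg z).trans hz

section Gibbs

variable {α E : Type*} [NormedAddCommGroup E] [InnerProductSpace ℝ E]
  {γ B C R : ℝ} {f g : α → E} {r : α → ℝ} {z : E}

noncomputable def gibbsWeight (γ : ℝ) (f : α → E) (r : α → ℝ) (z : E) (a : α) : ℝ :=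
  Real.exp ((⟪f a, z⟫ + r a) / γ)

theorem gibbs_eq_gibbsWeight_div {m d : ℕ} (𝒜 : Set (EuclideanSpace ℝ (Fin m))) (γ : ℝ)
    (f : EuclideanSpace ℝ (Fin m) → EuclideanSpace ℝ (Fin d)) (r : EuclideanSpace ℝ (Fin m) → ℝ)
    (z : EuclideanSpace ℝ (Fin d)) (a : EuclideanSpace ℝ (Fin m)) :
    gibbs 𝒜 γ f r z a = gibbsWeight γ f r z a / ∫ a' in 𝒜, gibbsWeight γ f r z a' :=
  rfl

theorem gibbsWeight_mem_Icc {a : α} (hγ : 0 < γ) (hf : ‖f a‖ ≤ B) (hz : ‖z‖ ≤ C)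
    (hr : |r a| ≤ R) :
    gibbsWeight γ f r z a ∈ Icc (Real.exp (-((B * C + R) / γ))) (Real.exp ((B * C + R) / γ)) :=
  have h := abs_le.1 (abs_inner_add_div_le hγ hf hz hr)
  ⟨Real.exp_le_exp.2 h.1, Real.exp_le_exp.2 h.2⟩

theorem abs_gibbsWeight_sub_le {a : α} (hγ : 0 < γ) (hf : ‖f a‖ ≤ B) (hg : ‖g a‖ ≤ B)
    (hz : ‖z‖ ≤ C) (hr : |r a| ≤ R) :
    |gibbsWeight γ g r z a - gibbsWeight γ f r z a|
      ≤ Real.exp ((B * C + R) / γ) * (|⟪f a - g a, z⟫| / γ) := by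
  refine (abs_exp_sub_exp_le (abs_le.1 (abs_inner_add_div_le hγ hg hz hr)).2
    (abs_le.1 (abs_inner_add_div_le hγ hf hz hr)).2).trans_eq ?_
  rw [div_sub_div_same, abs_div, abs_of_pos hγ, inner_sub_left, ← abs_neg]
  ring_nf

theorem integrableOn_gibbsWeight [MeasurableSpace α] [MeasurableSpace E] [BorelSpace E]
    [SecondCountableTopology E] {μ : Measure α} {s : Set α} (hs : MeasurableSet s)
    (hμs : μ s ≠ ⊤) (hγ : 0 < γ) (hfm : Measurable f) (hrm : Measurable r)
    (hf : ∀ a ∈ s, ‖f a‖ ≤ B) (hz : ‖z‖ ≤ C) (hr : ∀ a ∈ s, |r a| ≤ R) :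
    IntegrableOn (gibbsWeight γ f r z) s μ := by
  refine Measure.integrableOn_of_bounded hμs
    (((hfm.inner measurable_const).add hrm).div_const γ).exp.aestronglyMeasurable
    (M := Real.exp ((B * C + R) / γ)) ?_
  filter_upwards [ae_restrict_mem hs] with a ha
  exact (Real.norm_of_nonneg (Real.exp_pos _).le).trans_le
    (gibbsWeight_mem_Icc hγ (hf a ha) hz (hr a ha)).2

theorem bddAbove_abs_inner_sub_image {s : Set α} (hf : ∀ a ∈ s, ‖f a‖ ≤ B)
    (hg : ∀ a ∈ s, ‖g a‖ ≤ B) (hz : ‖z‖ ≤ C) :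
    BddAbove ((fun a => |⟪f a - g a, z⟫|) '' s) := by
  refine ⟨(B + B) * C, ?_⟩
  rintro _ ⟨a, ha, rfl⟩
  calc |⟪f a - g a, z⟫| ≤ ‖f a - g a‖ * C :=
        (abs_real_inner_le_norm _ _).trans (mul_le_mul_of_nonneg_left hz (norm_nonneg _))
    _ ≤ (B + B) * C :=
        mul_le_mul_of_nonneg_right (norm_sub_le_of_le (hf a ha) (hg a ha))
          ((norm_nonneg _).trans hz)

end Gibbs

theorem stmt10_general {m d : ℕ}
    (𝒜 : Set (EuclideanSpace ℝ (Fin m)))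
    (h𝒜 : IsCompact 𝒜) (h𝒜0 : 0 < volume 𝒜)
    (γ C B R : ℝ) (hγ : 0 < γ)
    (f g : EuclideanSpace ℝ (Fin m) → EuclideanSpace ℝ (Fin d))
    (r : EuclideanSpace ℝ (Fin m) → ℝ)
    (hf : Measurable f) (hg : Measurable g) (hr : Measurable r)
    (hfB : ∀ a ∈ 𝒜, ‖f a‖ ≤ B) (hgB : ∀ a ∈ 𝒜, ‖g a‖ ≤ B)
    (hrR : ∀ a ∈ 𝒜, |r a| ≤ R)
    (z' : EuclideanSpace ℝ (Fin d)) (hz' : ‖z'‖ ≤ C) :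
    dTV 𝒜 (gibbs 𝒜 γ g r z') (gibbs 𝒜 γ f r z') ≤
      1 / γ * Real.exp (2 * (B * C + R) / γ) *
        sSup ((fun a => |⟪f a - g a, z'⟫|) '' 𝒜) := by
  set K := (B * C + R) / γ
  set M := sSup ((fun a => |⟪f a - g a, z'⟫|) '' 𝒜)
  have h𝒜m : MeasurableSet 𝒜 := h𝒜.isClosed.measurableSet
  have hM : ∀ a ∈ 𝒜, |⟪f a - g a, z'⟫| ≤ M := fun a ha =>
    le_csSup (bddAbove_abs_inner_sub_image hfB hgB hz') ⟨a, ha, rfl⟩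
  have : Nonempty {A // MeasurableSet A ∧ A ⊆ 𝒜} := ⟨⟨∅, .empty, empty_subset _⟩⟩
  refine ciSup_le fun A => ?_
  simp only [gibbs_eq_gibbsWeight_div, integral_div]
  calc _ ≤ Real.exp K * (M / γ) / Real.exp (-K) :=
        abs_setIntegral_div_sub_setIntegral_div_le_of_bounds h𝒜m h𝒜0.ne'
          h𝒜.measure_lt_top.ne A.2.1 A.2.2
          (integrableOn_gibbsWeight h𝒜m h𝒜.measure_lt_top.ne hγ hf hr hfB hz' hrR)
          (integrableOn_gibbsWeight h𝒜m h𝒜.measure_lt_top.ne hγ hg hr hgB hz' hrR)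
          (Real.exp_pos _) (fun a ha => (gibbsWeight_mem_Icc hγ (hfB a ha) hz' (hrR a ha)).1)
          (fun a ha => (gibbsWeight_mem_Icc hγ (hgB a ha) hz' (hrR a ha)).1)
          (fun a ha => (abs_gibbsWeight_sub_le hγ (hfB a ha) (hgB a ha) hz' (hrR a ha)).trans
            (by gcongr; exact hM a ha))
    _ = 1 / γ * Real.exp (2 * (B * C + R) / γ) * M := by
        rw [mul_div_right_comm, ← Real.exp_sub, show K - -K = 2 * (B * C + R) / γ by ring]
        ring

theorem stmt10 {m d : ℕ}
    (𝒜 : Set (EuclideanSpace ℝ (Fin m)))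
    (h𝒜 : IsCompact 𝒜) (h𝒜0 : 0 < volume 𝒜) (h𝒜fin : volume 𝒜 < ⊤)
    (γ C B R : ℝ) (hγ : 0 < γ) (hC : 0 < C) (hB : 0 < B) (hR : 0 < R)
    (f g : EuclideanSpace ℝ (Fin m) → EuclideanSpace ℝ (Fin d))
    (r : EuclideanSpace ℝ (Fin m) → ℝ)
    (hf : Measurable f) (hg : Measurable g) (hr : Measurable r)
    (hfB : ∀ a ∈ 𝒜, ‖f a‖ ≤ B) (hgB : ∀ a ∈ 𝒜, ‖g a‖ ≤ B)
    (hrR : ∀ a ∈ 𝒜, |r a| ≤ R)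
    (z' : EuclideanSpace ℝ (Fin d)) (hz' : ‖z'‖ ≤ C) :
    dTV 𝒜 (gibbs 𝒜 γ g r z') (gibbs 𝒜 γ f r z') ≤
      1 / γ * Real.exp (2 * (B * C + R) / γ) *
        sSup ((fun a => |⟪f a - g a, z'⟫|) '' 𝒜) :=
  stmt10_general 𝒜 h𝒜 h𝒜0 γ C B R hγ f g r hf hg hr hfB hgB hrR z' hz'
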